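/- arXiv:1205.0662 — 8 statements merged into one kernel-verified Lean document; each statement's English description precedes it below -/
import Mathlib

section
/- Let Ω be a nonempty compact subset of ℝ^n (n ≥ 2), v a unit vector, and b ∈ ℝ. Then b ≥ l_Ω(v) if and only if for every x ∈ Ω with x·v > b, the closed segment joining x and R_{v,b}(x) is contained in Ω. -/
open scoped RealInnerProductSpace

/-- Reflection in the hyperplane `{x : x·v = b}` (for a unit vector `v`). -/
noncomputable def reflHyp {n : ℕ} (v : EuclideanSpace ℝ (Fin n)) (b : ℝ)
    (x : EuclideanSpace ℝ (Fin n)) : EuclideanSpace ℝ (Fin n) :=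
  x - (2 * (⟪x, v⟫ - b)) • v

/-- The open cap of `X` above the hyperplane `{x : x·v = b}`. -/
def cap {n : ℕ} (X : Set (EuclideanSpace ℝ (Fin n))) (v : EuclideanSpace ℝ (Fin n)) (b : ℝ) :
    Set (EuclideanSpace ℝ (Fin n)) :=
  X ∩ {x | b < ⟪x, v⟫}

/-- The level of the maximal cap of `X` in direction `v`. -/
noncomputable def level {n : ℕ} (X : Set (EuclideanSpace ℝ (Fin n)))
    (v : EuclideanSpace ℝ (Fin n)) : ℝ :=
  sInf {a : ℝ | ∀ b : ℝ, a ≤ b → reflHyp v b '' cap X v b ⊆ X}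

/-- The minimal unfolded region (heart) of `X`. -/
noncomputable def Uf {n : ℕ} (X : Set (EuclideanSpace ℝ (Fin n))) :
    Set (EuclideanSpace ℝ (Fin n)) :=
  ⋂ v ∈ {v : EuclideanSpace ℝ (Fin n) | ‖v‖ = 1}, {x | ⟪x, v⟫ ≤ level X v}

/-- The δ-parallel body of `Ω`: the union of closed δ-balls centered in `Ω`. -/
def parallelBody {n : ℕ} (Ω : Set (EuclideanSpace ℝ (Fin n))) (δ : ℝ) :
    Set (EuclideanSpace ℝ (Fin n)) :=
  ⋃ x ∈ Ω, Metric.closedBall x δ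

lemma inner_reflHyp {n : ℕ} {v : EuclideanSpace ℝ (Fin n)} (hv : ‖v‖ = 1) (c : ℝ)
    (x : EuclideanSpace ℝ (Fin n)) : ⟪reflHyp v c x, v⟫ = 2 * c - ⟪x, v⟫ := by
  have hvv : ⟪v, v⟫ = 1 := by
    rw [real_inner_self_eq_norm_mul_norm, hv]; ring
  rw [reflHyp, inner_sub_left, real_inner_smul_left, hvv]; ring

lemma reflHyp_segment {n : ℕ} {v : EuclideanSpace ℝ (Fin n)} (x : EuclideanSpace ℝ (Fin n))
    {s c b : ℝ} (h : s * (⟪x, v⟫ - b) = ⟪x, v⟫ - c) :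
    (1 - s) • x + s • (reflHyp v b x) = reflHyp v c x := by
  unfold reflHyp
  match_scalars
  · ring
  · linear_combination (-2 : ℝ) * h

/-- Closure of the reflection property at the boundary level. -/
lemma refl_mem_of_forall_gt {n : ℕ} {Ω : Set (EuclideanSpace ℝ (Fin n))}
    {v : EuclideanSpace ℝ (Fin n)} {b : ℝ} (hΩ : IsCompact Ω)
    (h : ∀ c, b < c → reflHyp v c '' cap Ω v c ⊆ Ω) :
    reflHyp v b '' cap Ω v b ⊆ Ω := by
  rintro _ ⟨x, ⟨hxΩ, hxt⟩, rfl⟩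
  have hxt' : b < ⟪x, v⟫ := hxt
  have hcont : Continuous (fun c : ℝ => reflHyp v c x) := by
    unfold reflHyp; fun_prop
  have htend : Filter.Tendsto (fun c => reflHyp v c x) (nhdsWithin b (Set.Ioi b))
      (nhds (reflHyp v b x)) := (hcont.tendsto b).mono_left nhdsWithin_le_nhds
  apply hΩ.isClosed.mem_of_tendsto htend
  filter_upwards [Ioo_mem_nhdsGT_of_mem (Set.mem_Ico.mpr ⟨le_refl b, hxt'⟩)] with c hc
  exact h c hc.1 ⟨x, ⟨hxΩ, hc.2⟩, rfl⟩

theorem stmt0 {n : ℕ} (hn : 2 ≤ n) (Ω : Set (EuclideanSpace ℝ (Fin n)))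
    (hΩne : Ω.Nonempty) (hΩ : IsCompact Ω) (v : EuclideanSpace ℝ (Fin n)) (hv : ‖v‖ = 1)
    (b : ℝ) :
    level Ω v ≤ b ↔ ∀ x ∈ Ω, b < ⟪x, v⟫ → segment ℝ x (reflHyp v b x) ⊆ Ω := by
  set S : Set ℝ := {a : ℝ | ∀ c : ℝ, a ≤ c → reflHyp v c '' cap Ω v c ⊆ Ω} with hS
  obtain ⟨R, hR⟩ : ∃ R : ℝ, ∀ x ∈ Ω, ‖x‖ ≤ R := hΩ.isBounded.exists_norm_le
  obtain ⟨x₀, hx₀⟩ := hΩne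
  have hR0 : 0 ≤ R := le_trans (norm_nonneg x₀) (hR x₀ hx₀)
  -- the set S is nonempty
  have hSne : S.Nonempty := by
    refine ⟨R, fun c hc => ?_⟩
    rintro _ ⟨x, ⟨hxΩ, hxt⟩, rfl⟩
    exfalso
    have h1 : ⟪x, v⟫ ≤ ‖x‖ := by
      calc ⟪x, v⟫ ≤ ‖x‖ * ‖v‖ := real_inner_le_norm x v
        _ = ‖x‖ := by rw [hv, mul_one]
    have : c < ⟪x, v⟫ := hxt
    linarith [hR x hxΩ]
  -- the set S is bounded below
  have hSbdd : BddBelow S := by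
    refine ⟨-(R + 1), fun a ha => ?_⟩
    by_contra hcon
    push_neg at hcon
    have hP : reflHyp v (-(R + 1)) '' cap Ω v (-(R + 1)) ⊆ Ω := ha _ hcon.le
    have hx₀cap : x₀ ∈ cap Ω v (-(R + 1)) := by
      refine ⟨hx₀, ?_⟩
      have : -⟪x₀, v⟫ ≤ ‖x₀‖ := by
        calc -⟪x₀, v⟫ = ⟪-x₀, v⟫ := by rw [inner_neg_left]
          _ ≤ ‖-x₀‖ * ‖v‖ := real_inner_le_norm _ _
          _ = ‖x₀‖ := by rw [norm_neg, hv, mul_one]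
      have := hR x₀ hx₀
      show -(R + 1) < ⟪x₀, v⟫
      linarith
    have hmem : reflHyp v (-(R + 1)) x₀ ∈ Ω := hP ⟨x₀, hx₀cap, rfl⟩
    have hnle : ‖reflHyp v (-(R + 1)) x₀‖ ≤ R := hR _ hmem
    have hinner : ⟪reflHyp v (-(R + 1)) x₀, v⟫ = 2 * (-(R + 1)) - ⟪x₀, v⟫ :=
      inner_reflHyp hv _ _
    have h2 : -⟪reflHyp v (-(R + 1)) x₀, v⟫ ≤ ‖reflHyp v (-(R + 1)) x₀‖ := by
      calc -⟪reflHyp v (-(R + 1)) x₀, v⟫ = ⟪-(reflHyp v (-(R + 1)) x₀), v⟫ := by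
            rw [inner_neg_left]
        _ ≤ ‖-(reflHyp v (-(R + 1)) x₀)‖ * ‖v‖ := real_inner_le_norm _ _
        _ = ‖reflHyp v (-(R + 1)) x₀‖ := by rw [norm_neg, hv, mul_one]
    have h3 : ⟪x₀, v⟫ ≤ ‖x₀‖ := by
      calc ⟪x₀, v⟫ ≤ ‖x₀‖ * ‖v‖ := real_inner_le_norm x₀ v
        _ = ‖x₀‖ := by rw [hv, mul_one]
    have h4 : -⟪x₀, v⟫ ≤ ‖x₀‖ := by
      calc -⟪x₀, v⟫ = ⟪-x₀, v⟫ := by rw [inner_neg_left]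
        _ ≤ ‖-x₀‖ * ‖v‖ := real_inner_le_norm _ _
        _ = ‖x₀‖ := by rw [norm_neg, hv, mul_one]
    have := hR x₀ hx₀
    rw [hinner] at h2
    linarith
  have hlevel : level Ω v = sInf S := rfl
  constructor
  · -- forward direction
    intro hle x hxΩ hxb p hp
    -- the reflection property holds at every level `c ≥ b`
    have hPgt : ∀ c, b < c → reflHyp v c '' cap Ω v c ⊆ Ω := by
      intro c hc
      have : sInf S < c := lt_of_le_of_lt (hlevel ▸ hle) hc
      obtain ⟨a, haS, hac⟩ := exists_lt_of_csInf_lt hSne this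
      exact haS c hac.le
    have hP : ∀ c, b ≤ c → reflHyp v c '' cap Ω v c ⊆ Ω := by
      intro c hc
      rcases eq_or_lt_of_le hc with rfl | hlt
      · exact refl_mem_of_forall_gt hΩ hPgt
      · exact hPgt c hlt
    rw [segment_eq_image] at hp
    obtain ⟨s, ⟨hs0, hs1⟩, rfl⟩ := hp
    rcases eq_or_lt_of_le hs0 with rfl | hs0'
    · simpa using hxΩ
    · set c : ℝ := ⟪x, v⟫ - s * (⟪x, v⟫ - b) with hc
      have hcb : b ≤ c := by nlinarith
      have hct : c < ⟪x, v⟫ := by nlinarith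
      have heq : (1 - s) • x + s • (reflHyp v b x) = reflHyp v c x :=
        reflHyp_segment x (by rw [hc]; ring)
      show (1 - s) • x + s • (reflHyp v b x) ∈ Ω
      rw [heq]
      exact hP c hcb ⟨x, ⟨hxΩ, hct⟩, rfl⟩
  · -- reverse direction
    intro h
    have hbS : b ∈ S := by
      intro c hc
      rintro _ ⟨x, ⟨hxΩ, hxt⟩, rfl⟩
      have hxt' : c < ⟪x, v⟫ := hxt
      have hxb : b < ⟪x, v⟫ := lt_of_le_of_lt hc hxt'
      have htb : (0 : ℝ) < ⟪x, v⟫ - b := by linarith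
      set s : ℝ := (⟪x, v⟫ - c) / (⟪x, v⟫ - b) with hs
      have hs0 : 0 ≤ s := div_nonneg (by linarith) htb.le
      have hs1 : s ≤ 1 := by
        rw [hs, div_le_one htb]; linarith
      have hseq : s * (⟪x, v⟫ - b) = ⟪x, v⟫ - c := div_mul_cancel₀ _ htb.ne'
      have heq : (1 - s) • x + s • (reflHyp v b x) = reflHyp v c x :=
        reflHyp_segment x hseq
      have hmem : reflHyp v c x ∈ segment ℝ x (reflHyp v b x) := by
        rw [segment_eq_image]
        exact ⟨s, ⟨hs0, hs1⟩, heq⟩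
      exact h x hxΩ hxb hmem
    exact csInf_le hSbdd hbS
end

section
/- Let Ω be a nonempty compact subset of ℝ^n (n ≥ 2) and v a unit vector. Then for every b ≥ l_Ω(v), the reflection R_{v,b} maps the closure of cap^+_{v,b}(Ω) into Ω; in particular the infimum defining l_Ω(v) is attained, i.e. R_{v,l_Ω(v)}(cap^+_{v,l_Ω(v)}(Ω)) ⊆ Ω. -/
open scoped RealInnerProductSpace

/-!
The admissible levels `a` (those above which every reflected cap stays in `X`) form an up-set,
nonempty as soon as `X` is bounded in direction `v`. Hence every `b > level X v` is admissible, and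
at `b = level X v` itself one passes to the limit `b' ↓ b` in `reflHyp v b' x ∈ X`, using that `X`
is closed and `b' ↦ reflHyp v b' x` is continuous. Continuity of the reflection then extends the
inclusion from the cap to its closure.
-/

namespace reflHyp

variable {n : ℕ}

lemma continuous (v : EuclideanSpace ℝ (Fin n)) (b : ℝ) : Continuous (reflHyp v b) := by
  unfold reflHyp
  fun_prop

lemma continuous_level (v x : EuclideanSpace ℝ (Fin n)) : Continuous fun b : ℝ => reflHyp v b x := by
  unfold reflHyp
  fun_prop

end reflHyp

section Level

variable {n : ℕ} {X : Set (EuclideanSpace ℝ (Fin n))} {v : EuclideanSpace ℝ (Fin n)} {b : ℝ}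

lemma cap_eq_empty_of_mem_upperBounds (hb : b ∈ upperBounds ((⟪·, v⟫) '' X)) :
    cap X v b = ∅ :=
  Set.eq_empty_of_forall_notMem fun x ⟨hxX, hxb⟩ => (hb ⟨x, hxX, rfl⟩).not_gt hxb

lemma nonempty_admissible_levels (hX : BddAbove ((⟪·, v⟫) '' X)) :
    {a : ℝ | ∀ b : ℝ, a ≤ b → reflHyp v b '' cap X v b ⊆ X}.Nonempty := by
  obtain ⟨M, hM⟩ := hX
  refine ⟨M, fun b hb => ?_⟩
  rw [cap_eq_empty_of_mem_upperBounds (upperBounds_mono_mem hb hM), Set.image_empty]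
  exact Set.empty_subset X

lemma reflHyp_image_cap_subset_of_level_lt (hX : BddAbove ((⟪·, v⟫) '' X))
    (hb : level X v < b) : reflHyp v b '' cap X v b ⊆ X := by
  obtain ⟨a, ha, hab⟩ := exists_lt_of_csInf_lt (nonempty_admissible_levels hX) hb
  exact ha b hab.le

lemma reflHyp_image_cap_subset_of_level_le (hXc : IsClosed X) (hX : BddAbove ((⟪·, v⟫) '' X))
    (hb : level X v ≤ b) : reflHyp v b '' cap X v b ⊆ X := by
  rintro _ ⟨x, ⟨hxX, hxb⟩, rfl⟩
  have hIoo : Set.Ioo b ⟪x, v⟫ ⊆ {b' : ℝ | reflHyp v b' x ∈ X} := fun b' ⟨hbb', hb'x⟩ =>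
    reflHyp_image_cap_subset_of_level_lt hX (hb.trans_lt hbb') ⟨x, ⟨hxX, hb'x⟩, rfl⟩
  have hb_mem : b ∈ closure (Set.Ioo b ⟪x, v⟫) := by
    rw [closure_Ioo hxb.ne]
    exact ⟨le_rfl, hxb.le⟩
  exact closure_minimal hIoo (hXc.preimage (reflHyp.continuous_level v x)) hb_mem

lemma reflHyp_image_closure_cap_subset_of_level_le (hXc : IsClosed X)
    (hX : BddAbove ((⟪·, v⟫) '' X)) (hb : level X v ≤ b) :
    reflHyp v b '' closure (cap X v b) ⊆ X :=
  calc reflHyp v b '' closure (cap X v b)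
      ⊆ closure (reflHyp v b '' cap X v b) :=
        image_closure_subset_closure_image (reflHyp.continuous v b)
    _ ⊆ X := closure_minimal (reflHyp_image_cap_subset_of_level_le hXc hX hb) hXc

end Level

theorem stmt1_general {n : ℕ} (Ω : Set (EuclideanSpace ℝ (Fin n)))
    (hΩ : IsCompact Ω) (v : EuclideanSpace ℝ (Fin n)) :
    (∀ b : ℝ, level Ω v ≤ b → reflHyp v b '' closure (cap Ω v b) ⊆ Ω) ∧
      reflHyp v (level Ω v) '' cap Ω v (level Ω v) ⊆ Ω := by
  have hbdd : BddAbove ((⟪·, v⟫) '' Ω) :=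
    hΩ.bddAbove_image (continuous_id.inner continuous_const).continuousOn
  exact ⟨fun b hb => reflHyp_image_closure_cap_subset_of_level_le hΩ.isClosed hbdd hb,
    reflHyp_image_cap_subset_of_level_le hΩ.isClosed hbdd le_rfl⟩

theorem stmt1 {n : ℕ} (hn : 2 ≤ n) (Ω : Set (EuclideanSpace ℝ (Fin n)))
    (hΩne : Ω.Nonempty) (hΩ : IsCompact Ω) (v : EuclideanSpace ℝ (Fin n)) (hv : ‖v‖ = 1) :
    (∀ b : ℝ, level Ω v ≤ b → reflHyp v b '' closure (cap Ω v b) ⊆ Ω) ∧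
      reflHyp v (level Ω v) '' cap Ω v (level Ω v) ⊆ Ω :=
  stmt1_general Ω hΩ v
end

section
/- Let Ω be a nonempty compact subset of ℝ^n (n ≥ 2), v a unit vector, and write l = l_Ω(v). Then every point of Ω lying strictly above the hyperplane {x : x·v = l} is the image under R_{v,l} of a point of Ω lying strictly below it; that is, cap^+_{v,l}(Ω) ⊆ R_{v,l}(Ω ∩ {x : x·v < l}). -/
open scoped RealInnerProductSpace

theorem stmt2 {n : ℕ} (hn : 2 ≤ n) (Ω : Set (EuclideanSpace ℝ (Fin n)))
    (hΩne : Ω.Nonempty) (hΩ : IsCompact Ω) (v : EuclideanSpace ℝ (Fin n)) (hv : ‖v‖ = 1) :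
    cap Ω v (level Ω v) ⊆
      reflHyp v (level Ω v) '' (Ω ∩ {x | ⟪x, v⟫ < level Ω v}) := by
  have hvv : ⟪v, v⟫ = 1 := by
    rw [real_inner_self_eq_norm_sq, hv]; norm_num
  set l := level Ω v with hl
  rintro x ⟨hxΩ, hxl⟩
  simp only [Set.mem_setOf_eq] at hxl
  set S : Set ℝ := {a : ℝ | ∀ b : ℝ, a ≤ b → reflHyp v b '' cap Ω v b ⊆ Ω} with hS
  have hSne : S.Nonempty := by
    obtain ⟨R, hR⟩ := hΩ.isBounded.subset_closedBall 0
    refine ⟨R, fun b hb y hy => ?_⟩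
    obtain ⟨z, ⟨hzΩ, hzb⟩, rfl⟩ := hy
    exfalso
    have h1 : ⟪z, v⟫ ≤ R := by
      calc ⟪z, v⟫ ≤ ‖z‖ * ‖v‖ := real_inner_le_norm z v
        _ = ‖z‖ := by rw [hv, mul_one]
        _ ≤ R := by simpa using hR hzΩ
    simp only [Set.mem_setOf_eq] at hzb
    linarith
  have key : ∀ b, l < b → b < ⟪x, v⟫ → reflHyp v b x ∈ Ω := by
    intro b hlb hbx
    obtain ⟨a, haS, hab⟩ : ∃ a ∈ S, a < b := by
      by_cases hbd : BddBelow S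
      · have : sInf S < b := hlb
        exact (csInf_lt_iff hbd hSne).mp this
      · obtain ⟨a, haS, ha⟩ := not_bddBelow_iff.mp hbd b
        exact ⟨a, haS, ha⟩
    exact haS b hab.le ⟨x, ⟨hxΩ, hbx⟩, rfl⟩
  have hyΩ : reflHyp v l x ∈ Ω := by
    rw [← hΩ.isClosed.closure_eq]
    refine Metric.mem_closure_iff.mpr fun ε hε => ?_
    obtain ⟨b, hb1, hb2⟩ : ∃ b, l < b ∧ b < min (l + ε / 2) ⟪x, v⟫ :=
      exists_between (lt_min (by linarith) hxl)
    refine ⟨reflHyp v b x, key b hb1 (hb2.trans_le (min_le_right _ _)), ?_⟩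
    have hbε : b < l + ε / 2 := hb2.trans_le (min_le_left _ _)
    have : reflHyp v l x - reflHyp v b x = (2 * (l - b)) • v := by
      simp only [reflHyp]
      module
    rw [dist_eq_norm, this, norm_smul]
    simp only [Real.norm_eq_abs, hv, mul_one]
    rw [abs_of_neg (by linarith)]
    linarith
  refine ⟨reflHyp v l x, ⟨hyΩ, ?_⟩, ?_⟩
  · simp only [Set.mem_setOf_eq, reflHyp, inner_sub_left, real_inner_smul_left, hvv]
    nlinarith
  · simp only [reflHyp, inner_sub_left, real_inner_smul_left, hvv]
    module
end

section
/- Let Ω be a nonempty compact subset of ℝ^n (n ≥ 2), v a unit vector, and write l = l_Ω(v). Then for every z in the convex hull of Ω with z·v > l, the closed segment joining z and R_{v,l}(z) is contained in the convex hull of Ω. -/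
open scoped RealInnerProductSpace

/-!
The segment from `z` to `R_l z` consists of the points `R_b z` with `l ≤ b ≤ ⟪z, v⟫`, so it
suffices that `R_b z` lies in the hull for every such `b`. For `b ≥ l` the reflection maps the
cap of `Ω` above level `b` into `Ω` (at `b = l` by closedness, as a limit of levels `b ↓ l`).
Then the hull points `z` with `b ≤ ⟪z, v⟫ → R_b z ∈ hull` form a convex set containing `Ω`:
`R_b` is affine, and for a combination of a point above and a point below the hyperplane the
point below is paid for with part of the mass of the reflected point above.
-/

open Topology

theorem Convex.smul_add_smul_add_smul_mem {E : Type*} [AddCommGroup E] [Module ℝ E]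
    {K : Set E} (hK : Convex ℝ K) {x y z : E} (hx : x ∈ K) (hy : y ∈ K) (hz : z ∈ K)
    {a b c : ℝ} (ha : 0 ≤ a) (hb : 0 ≤ b) (hc : 0 ≤ c) (habc : a + b + c = 1) :
    a • x + b • y + c • z ∈ K := by
  have := hK.sum_mem (t := Finset.univ) (w := ![a, b, c]) (z := ![x, y, z])
    (by intro i _; fin_cases i <;> simpa) (by simp [Fin.sum_univ_three, habc])
    (by intro i _; fin_cases i <;> simpa)
  simpa [Fin.sum_univ_three] using this

section Reflection

variable {n : ℕ} {v : EuclideanSpace ℝ (Fin n)} {b : ℝ}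

theorem reflHyp_eq_self {x : EuclideanSpace ℝ (Fin n)} (hx : ⟪x, v⟫ = b) :
    reflHyp v b x = x := by
  simp [reflHyp, hx]

theorem reflHyp_smul_add_smul (x y : EuclideanSpace ℝ (Fin n)) {a c : ℝ} (hac : a + c = 1) :
    reflHyp v b (a • x + c • y) = a • reflHyp v b x + c • reflHyp v b y := by
  simp only [reflHyp, inner_add_left, real_inner_smul_left]
  match_scalars
  · ring
  · ring
  · linear_combination (-2 * b) * hac

theorem exists_reflHyp_eq_of_mem_segment {x w : EuclideanSpace ℝ (Fin n)} (hbx : b ≤ ⟪x, v⟫)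
    (hw : w ∈ segment ℝ x (reflHyp v b x)) :
    ∃ c, b ≤ c ∧ c ≤ ⟪x, v⟫ ∧ w = reflHyp v c x := by
  obtain ⟨a, c, ha, hc, hac, rfl⟩ := hw
  refine ⟨⟪x, v⟫ - c * (⟪x, v⟫ - b), by nlinarith, by nlinarith, ?_⟩
  simp only [reflHyp]
  match_scalars
  · linear_combination hac
  · ring

theorem reflHyp_image_cap_subset_of_level_lt_s3 {Ω : Set (EuclideanSpace ℝ (Fin n))}
    (hΩ : Bornology.IsBounded Ω) (hb : level Ω v < b) : reflHyp v b '' cap Ω v b ⊆ Ω := by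
  set S := {a : ℝ | ∀ b : ℝ, a ≤ b → reflHyp v b '' cap Ω v b ⊆ Ω}
  -- `level Ω v = sInf S` is junk unless `S` is nonempty; above `M * ‖v‖` every cap is empty.
  obtain ⟨M, hM⟩ := hΩ.exists_norm_le
  have hS : S.Nonempty := by
    refine ⟨M * ‖v‖, fun b' hb' _ ⟨x, ⟨hx, hbx⟩, _⟩ => ?_⟩
    refine (not_le.2 (show b' < ⟪x, v⟫ from hbx) ?_).elim
    calc ⟪x, v⟫ ≤ ‖x‖ * ‖v‖ := real_inner_le_norm x v
      _ ≤ M * ‖v‖ := by gcongr; exact hM x hx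
      _ ≤ b' := hb'
  obtain ⟨a, haS, hab⟩ : ∃ a ∈ S, a < b := by
    by_cases hbdd : BddBelow S
    · exact exists_lt_of_csInf_lt hS hb
    · exact not_bddBelow_iff.1 hbdd b
  exact haS b hab.le

theorem reflHyp_image_cap_subset_of_level_le_s3 {Ω : Set (EuclideanSpace ℝ (Fin n))}
    (hΩ : IsCompact Ω) (hb : level Ω v ≤ b) : reflHyp v b '' cap Ω v b ⊆ Ω := by
  rintro _ ⟨x, ⟨hx, hbx⟩, rfl⟩
  have hnear : ∀ᶠ c in 𝓝[>] b, reflHyp v c x ∈ Ω := by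
    filter_upwards [Ioo_mem_nhdsGT hbx] with c ⟨hbc, hcx⟩
    exact reflHyp_image_cap_subset_of_level_lt_s3 hΩ.isBounded (hb.trans_lt hbc)
      ⟨x, ⟨hx, hcx⟩, rfl⟩
  have hcont : Continuous fun c : ℝ => reflHyp v c x := by unfold reflHyp; fun_prop
  exact hΩ.isClosed.mem_of_tendsto hcont.continuousWithinAt.tendsto hnear

/-- `R (a • x + c • y) = (a - s) • R x + s • x + c • y`, where `s (⟪x, v⟫ - b) = c (b - ⟪y, v⟫)`. -/
theorem Convex.reflHyp_smul_add_smul_mem_of_inner_le {K : Set (EuclideanSpace ℝ (Fin n))}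
    (hK : Convex ℝ K) {x y : EuclideanSpace ℝ (Fin n)} (hx : x ∈ K) (hy : y ∈ K)
    (hRx : reflHyp v b x ∈ K) (hbx : b < ⟪x, v⟫) (hyb : ⟪y, v⟫ ≤ b) {a c : ℝ} (hc : 0 ≤ c)
    (hac : a + c = 1) (hbz : b ≤ ⟪a • x + c • y, v⟫) :
    reflHyp v b (a • x + c • y) ∈ K := by
  have hz : ⟪a • x + c • y, v⟫ = a * ⟪x, v⟫ + c * ⟪y, v⟫ := by
    rw [inner_add_left, real_inner_smul_left, real_inner_smul_left]
  have hxb : 0 < ⟪x, v⟫ - b := by linarith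
  set s := c * (b - ⟪y, v⟫) / (⟪x, v⟫ - b) with hs
  have hs0 : 0 ≤ s := div_nonneg (mul_nonneg hc (by linarith)) hxb.le
  have hsa : s ≤ a := by
    rw [hs, div_le_iff₀ hxb]
    linear_combination hbz + hz + b * hac
  have hsx : s * (⟪x, v⟫ - b) = c * (b - ⟪y, v⟫) := div_mul_cancel₀ _ hxb.ne'
  clear_value s
  have key : reflHyp v b (a • x + c • y) = (a - s) • reflHyp v b x + s • x + c • y := by
    simp only [reflHyp, hz]
    match_scalars
    · ring
    · ring
    · linear_combination -2 * hsx - 2 * b * hac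
  rw [key]
  exact hK.smul_add_smul_add_smul_mem hRx hx hy (by linarith) hs0 hc (by linarith)

theorem Convex.setOf_reflHyp_mem {K : Set (EuclideanSpace ℝ (Fin n))} (hK : Convex ℝ K) :
    Convex ℝ {z | z ∈ K ∧ (b ≤ ⟪z, v⟫ → reflHyp v b z ∈ K)} := by
  rintro x ⟨hxK, hRx⟩ y ⟨hyK, hRy⟩ a c ha hc hac
  refine ⟨hK hxK hyK ha hc hac, fun hbz' => ?_⟩
  rcases hbz'.eq_or_lt with hzb | hbz
  · rw [reflHyp_eq_self hzb.symm]
    exact hK hxK hyK ha hc hac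
  clear hbz'
  wlog hyx : ⟪y, v⟫ ≤ ⟪x, v⟫ generalizing x y a c
  · rw [add_comm] at hbz ⊢
    exact this hyK hRy hxK hRx hc ha (by linarith) hbz (by linarith)
  have hz : ⟪a • x + c • y, v⟫ = a * ⟪x, v⟫ + c * ⟪y, v⟫ := by
    rw [inner_add_left, real_inner_smul_left, real_inner_smul_left]
  have hbx : b < ⟪x, v⟫ := by
    have hx : a * ⟪x, v⟫ + c * ⟪x, v⟫ = ⟪x, v⟫ := by rw [← add_mul, hac, one_mul]
    linarith [mul_le_mul_of_nonneg_left hyx hc]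
  rcases le_or_gt b ⟪y, v⟫ with hby | hyb
  · rw [reflHyp_smul_add_smul x y hac]
    exact hK (hRx hbx.le) (hRy hby) ha hc hac
  · exact hK.reflHyp_smul_add_smul_mem_of_inner_le hxK hyK (hRx hbx.le) hbx hyb.le hc hac hbz.le

theorem reflHyp_mem_convexHull {Ω : Set (EuclideanSpace ℝ (Fin n))}
    (hΩ : reflHyp v b '' cap Ω v b ⊆ Ω) {z : EuclideanSpace ℝ (Fin n)}
    (hz : z ∈ convexHull ℝ Ω) (hbz : b ≤ ⟪z, v⟫) : reflHyp v b z ∈ convexHull ℝ Ω := by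
  have hΩW : Ω ⊆ {x | x ∈ convexHull ℝ Ω ∧ (b ≤ ⟪x, v⟫ → reflHyp v b x ∈ convexHull ℝ Ω)} := by
    refine fun x hx => ⟨subset_convexHull ℝ Ω hx, fun hbx => ?_⟩
    rcases hbx.eq_or_lt with hxb | hxb
    · rw [reflHyp_eq_self hxb.symm]
      exact subset_convexHull ℝ Ω hx
    · exact subset_convexHull ℝ Ω (hΩ ⟨x, ⟨hx, hxb⟩, rfl⟩)
  exact (convexHull_min hΩW (convex_convexHull ℝ Ω).setOf_reflHyp_mem hz).2 hbz

end Reflection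

theorem stmt3_general {n : ℕ} (Ω : Set (EuclideanSpace ℝ (Fin n)))
    (hΩ : IsCompact Ω) (v : EuclideanSpace ℝ (Fin n)) :
    ∀ z ∈ convexHull ℝ Ω, level Ω v < ⟪z, v⟫ →
      segment ℝ z (reflHyp v (level Ω v) z) ⊆ convexHull ℝ Ω := by
  intro z hz hlz w hw
  obtain ⟨b, hlb, hbz, rfl⟩ := exists_reflHyp_eq_of_mem_segment hlz.le hw
  exact reflHyp_mem_convexHull (reflHyp_image_cap_subset_of_level_le_s3 hΩ hlb) hz hbz

theorem stmt3 {n : ℕ} (hn : 2 ≤ n) (Ω : Set (EuclideanSpace ℝ (Fin n)))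
    (hΩne : Ω.Nonempty) (hΩ : IsCompact Ω) (v : EuclideanSpace ℝ (Fin n)) (hv : ‖v‖ = 1) :
    ∀ z ∈ convexHull ℝ Ω, level Ω v < ⟪z, v⟫ →
      segment ℝ z (reflHyp v (level Ω v) z) ⊆ convexHull ℝ Ω :=
  stmt3_general Ω hΩ v
end

section
/- Let Ω be a nonempty compact subset of ℝ^n (n ≥ 2). Then for every unit vector v, the level of the maximal cap of the convex hull of Ω is at most that of Ω: l_{conv(Ω)}(v) ≤ l_Ω(v). -/
open scoped RealInnerProductSpace

lemma key {n : ℕ} (Ω : Set (EuclideanSpace ℝ (Fin n))) (v : EuclideanSpace ℝ (Fin n)) (b : ℝ)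
    (h : reflHyp v b '' cap Ω v b ⊆ Ω) :
    reflHyp v b '' cap (convexHull ℝ Ω) v b ⊆ convexHull ℝ Ω := by
  rintro _ ⟨x, ⟨hxc, hxb⟩, rfl⟩
  simp only [Set.mem_setOf_eq] at hxb
  rw [convexHull_eq] at hxc
  obtain ⟨ι, t, w, z, hw0, hw1, hzΩ, hcm⟩ := hxc
  rw [Finset.centerMass_eq_of_sum_1 _ _ hw1] at hcm
  set g : ι → ℝ := fun i => max (⟪z i, v⟫ - b) 0 with hg
  set T : ℝ := ∑ i ∈ t, w i * g i with hT
  have hxv : ⟪x, v⟫ = ∑ i ∈ t, w i * ⟪z i, v⟫ := by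
    rw [← hcm, sum_inner]
    exact Finset.sum_congr rfl fun i _ => real_inner_smul_left _ _ _
  have ht' : (0:ℝ) < ⟪x, v⟫ - b := by linarith
  have hTt : ⟪x, v⟫ - b ≤ T := by
    have h1 : ⟪x, v⟫ - b = ∑ i ∈ t, w i * (⟪z i, v⟫ - b) := by
      simp only [mul_sub, Finset.sum_sub_distrib, ← Finset.sum_mul, hw1, hxv, one_mul]
    rw [h1, hT]
    refine Finset.sum_le_sum fun i hi => ?_
    exact mul_le_mul_of_nonneg_left (le_max_left _ _) (hw0 i hi)
  have hT0 : 0 < T := lt_of_lt_of_le ht' hTt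
  set θ : ℝ := (⟪x, v⟫ - b) / T with hθ
  have hθ0 : 0 ≤ θ := le_of_lt (div_pos ht' hT0)
  have hθ1 : θ ≤ 1 := (div_le_one hT0).mpr hTt
  set ζ : ι → EuclideanSpace ℝ (Fin n) := fun i => z i - (2 * θ * g i) • v with hζ
  have hζmem : ∀ i ∈ t, ζ i ∈ convexHull ℝ Ω := by
    intro i hi
    rcases le_or_gt (⟪z i, v⟫ - b) 0 with hle | hlt
    · have : g i = 0 := max_eq_right hle
      simp only [hζ, this, mul_zero, zero_smul, sub_zero]
      exact subset_convexHull ℝ Ω (hzΩ i hi)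
    · have hgi : g i = ⟪z i, v⟫ - b := max_eq_left hlt.le
      have hrefl : reflHyp v b (z i) ∈ Ω :=
        h ⟨z i, ⟨hzΩ i hi, show b < ⟪z i, v⟫ by linarith⟩, rfl⟩
      have : ζ i = (1 - θ) • z i + θ • reflHyp v b (z i) := by
        simp only [hζ, reflHyp, hgi, smul_sub, smul_smul]
        rw [sub_smul, one_smul]
        module
      rw [this]
      exact (convex_convexHull ℝ Ω) (subset_convexHull ℝ Ω (hzΩ i hi))
        (subset_convexHull ℝ Ω hrefl) (by linarith) hθ0 (by ring)
  have heq : reflHyp v b x = ∑ i ∈ t, w i • ζ i := by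
    have hsum : ∑ i ∈ t, w i • ζ i
        = (∑ i ∈ t, w i • z i) - (2 * θ * T) • v := by
      simp only [hζ, smul_sub, Finset.sum_sub_distrib, smul_smul]
      congr 1
      rw [← Finset.sum_smul, hT, Finset.mul_sum]
      congr 1
      exact Finset.sum_congr rfl fun i _ => by ring
    have hθT : θ * T = ⟪x, v⟫ - b := div_mul_cancel₀ _ hT0.ne'
    rw [hsum, hcm, reflHyp, mul_assoc, hθT]
  rw [heq]
  exact (convex_convexHull ℝ Ω).sum_mem hw0 hw1 hζmem

theorem stmt4 {n : ℕ} (hn : 2 ≤ n) (Ω : Set (EuclideanSpace ℝ (Fin n)))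
    (hΩne : Ω.Nonempty) (hΩ : IsCompact Ω) (v : EuclideanSpace ℝ (Fin n)) (hv : ‖v‖ = 1) :
    level (convexHull ℝ Ω) v ≤ level Ω v := by
  obtain ⟨R, hR0, hR⟩ : ∃ R, 0 ≤ R ∧ ∀ x ∈ convexHull ℝ Ω, ‖x‖ ≤ R := by
    obtain ⟨R, hR⟩ := (isBounded_convexHull.mpr hΩ.isBounded).exists_norm_le
    exact ⟨max R 0, le_max_right _ _, fun x hx => (hR x hx).trans (le_max_left _ _)⟩
  have hsub : Ω ⊆ convexHull ℝ Ω := subset_convexHull ℝ Ω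
  have hinner : ∀ x ∈ convexHull ℝ Ω, |⟪x, v⟫| ≤ R := fun x hx => by
    calc |⟪x, v⟫| ≤ ‖x‖ * ‖v‖ := abs_real_inner_le_norm x v
    _ = ‖x‖ := by rw [hv, mul_one]
    _ ≤ R := hR x hx
  -- Ω's admissible set is nonempty
  have hne : {a : ℝ | ∀ b : ℝ, a ≤ b → reflHyp v b '' cap Ω v b ⊆ Ω}.Nonempty := by
    refine ⟨R, fun b hb => ?_⟩
    rintro _ ⟨x, ⟨hxΩ, hxb⟩, rfl⟩
    exact absurd (lt_of_le_of_lt (le_trans ((abs_le.mp (hinner x (hsub hxΩ))).2) hb) hxb)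
      (lt_irrefl _)
  -- the convex hull's admissible set is bounded below
  obtain ⟨x₀, hx₀Ω⟩ := hΩne
  have hx₀ : x₀ ∈ convexHull ℝ Ω := hsub hx₀Ω
  have hbdd : BddBelow {a : ℝ | ∀ b : ℝ, a ≤ b →
      reflHyp v b '' cap (convexHull ℝ Ω) v b ⊆ convexHull ℝ Ω} := by
    refine ⟨-R, fun a ha => ?_⟩
    rcases le_or_gt ⟪x₀, v⟫ a with hle | hlt
    · linarith [(abs_le.mp (hinner x₀ hx₀)).1]
    · have hmem : reflHyp v a x₀ ∈ convexHull ℝ Ω :=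
        ha a le_rfl ⟨x₀, ⟨hx₀, show a < ⟪x₀, v⟫ from hlt⟩, rfl⟩
      have hcalc : ⟪reflHyp v a x₀, v⟫ = 2 * a - ⟪x₀, v⟫ := by
        simp only [reflHyp, inner_sub_left, real_inner_smul_left,
          real_inner_self_eq_norm_sq, hv]
        ring
      have := (abs_le.mp (hinner _ hmem)).1
      rw [hcalc] at this
      linarith [(abs_le.mp (hinner x₀ hx₀)).1]
  exact csInf_le_csInf hbdd hne fun a ha b hb => key Ω v b (ha b hb)
end

section
/- Let Ω be a nonempty compact subset of ℝ^n (n ≥ 2). Then the minimal unfolded region of the convex hull of Ω is included in the minimal unfolded region of Ω: Uf(conv(Ω)) ⊆ Uf(Ω). -/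
open scoped RealInnerProductSpace

/-- Key lemma: if the cap of `Ω` at level `b` folds into `Ω`, then the cap of the
convex hull folds into the convex hull. -/
lemma refl_cap_convexHull {n : ℕ} (v : EuclideanSpace ℝ (Fin n)) (b : ℝ)
    (Ω : Set (EuclideanSpace ℝ (Fin n)))
    (h : reflHyp v b '' cap Ω v b ⊆ Ω) :
    reflHyp v b '' cap (convexHull ℝ Ω) v b ⊆ convexHull ℝ Ω := by
  rintro _ ⟨y, ⟨hyK, hyb⟩, rfl⟩
  have hyK' := hyK
  rw [convexHull_eq] at hyK'
  obtain ⟨ι, t, w, z, hw0, hw1, hz, hy⟩ := hyK'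
  rw [Finset.centerMass_eq_of_sum_1 _ _ hw1] at hy
  set d : ι → ℝ := fun i => if ⟪z i, v⟫ ≤ b then 0 else 2 * (⟪z i, v⟫ - b) with hd
  set z' : ι → EuclideanSpace ℝ (Fin n) := fun i => z i - d i • v with hz'
  have hz'Ω : ∀ i ∈ t, z' i ∈ Ω := by
    intro i hi
    by_cases hib : ⟪z i, v⟫ ≤ b
    · simp only [hz', hd, if_pos hib, zero_smul, sub_zero]
      exact hz i hi
    · have : z' i = reflHyp v b (z i) := by
        simp only [hz', hd, if_neg hib, reflHyp]
      rw [this]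
      exact h ⟨z i, ⟨hz i hi, lt_of_not_ge hib⟩, rfl⟩
  set c : ℝ := ∑ i ∈ t, w i * d i with hc
  have hy' : ∑ i ∈ t, w i • z' i = y - c • v := by
    simp only [hz', smul_sub, smul_smul]
    rw [Finset.sum_sub_distrib, hy, hc, ← Finset.sum_smul]
  have hy'K : y - c • v ∈ convexHull ℝ Ω := by
    rw [← hy']
    exact (convex_convexHull ℝ Ω).sum_mem hw0 hw1
      (fun i hi => subset_convexHull ℝ Ω (hz'Ω i hi))
  set s : ℝ := 2 * (⟪y, v⟫ - b) with hs
  have hspos : 0 < s := by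
    have := hyb
    simp only [Set.mem_setOf_eq] at this
    simp only [hs]; linarith
  have hinner : ⟪y, v⟫ = ∑ i ∈ t, w i * ⟪z i, v⟫ := by
    rw [← hy, sum_inner]
    exact Finset.sum_congr rfl fun i _ => real_inner_smul_left _ _ _
  have hsc : s ≤ c := by
    have h1 : s = ∑ i ∈ t, w i * (2 * (⟪z i, v⟫ - b)) := by
      have : ∑ i ∈ t, w i * (2 * (⟪z i, v⟫ - b)) =
          2 * ((∑ i ∈ t, w i * ⟪z i, v⟫) - (∑ i ∈ t, w i) * b) := by
        rw [Finset.sum_mul, ← Finset.sum_sub_distrib, Finset.mul_sum]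
        exact Finset.sum_congr rfl fun i _ => by ring
      rw [hs, this, hw1, hinner]; ring
    rw [h1, hc]
    refine Finset.sum_le_sum fun i hi => ?_
    refine mul_le_mul_of_nonneg_left ?_ (hw0 i hi)
    by_cases hib : ⟪z i, v⟫ ≤ b
    · simp only [hd, if_pos hib]; linarith
    · simp only [hd, if_neg hib]; exact le_rfl
  have hcpos : 0 < c := lt_of_lt_of_le hspos hsc
  have hrepr : reflHyp v b y = (1 - s / c) • y + (s / c) • (y - c • v) := by
    simp only [reflHyp, ← hs, smul_sub, smul_smul]
    rw [div_mul_cancel₀ _ (ne_of_gt hcpos)]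
    module
  rw [hrepr]
  have h01 : 0 ≤ 1 - s / c := by
    have : s / c ≤ 1 := (div_le_one hcpos).2 hsc
    linarith
  exact (convex_convexHull ℝ Ω) hyK hy'K h01 (le_of_lt (div_pos hspos hcpos)) (by ring)

lemma level_convexHull_le {n : ℕ} (Ω : Set (EuclideanSpace ℝ (Fin n)))
    (hΩne : Ω.Nonempty) (hΩ : IsCompact Ω) (v : EuclideanSpace ℝ (Fin n)) (hv : ‖v‖ = 1) :
    level (convexHull ℝ Ω) v ≤ level Ω v := by
  set K := convexHull ℝ Ω with hK
  obtain ⟨M, hM⟩ : ∃ M, ∀ x ∈ K, |⟪x, v⟫| ≤ M := by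
    obtain ⟨R, hR⟩ := (isBounded_convexHull.2 hΩ.isBounded).subset_closedBall 0
    exact ⟨R, fun x hx => le_trans (abs_real_inner_le_norm x v) (by
      rw [hv, mul_one]; simpa using Metric.mem_closedBall.1 (hR hx))⟩
  obtain ⟨x₀, hx₀⟩ := hΩne
  have hx₀K : x₀ ∈ K := subset_convexHull ℝ Ω hx₀
  apply csInf_le_csInf
  · refine ⟨(⟪x₀, v⟫ - M) / 2, fun a ha => ?_⟩
    by_contra hlt
    push_neg at hlt
    have ht₀ := abs_le.1 (hM x₀ hx₀K)
    have ha' : a < ⟪x₀, v⟫ := by linarith [ht₀.1]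
    have hmem : reflHyp v a x₀ ∈ K := ha a le_rfl ⟨x₀, ⟨hx₀K, ha'⟩, rfl⟩
    have hb := (abs_le.1 (hM _ hmem)).1
    have hinner : ⟪reflHyp v a x₀, v⟫ = 2 * a - ⟪x₀, v⟫ := by
      have hvv : ⟪v, v⟫ = 1 := by
        rw [real_inner_self_eq_norm_sq, hv]; norm_num
      simp only [reflHyp, inner_sub_left, real_inner_smul_left, hvv]
      ring
    rw [hinner] at hb
    linarith
  · refine ⟨M, fun b hb => ?_⟩
    rintro _ ⟨x, ⟨hxΩ, hxb⟩, rfl⟩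
    exfalso
    have h1 := le_of_abs_le (hM x (subset_convexHull ℝ Ω hxΩ))
    simp only [Set.mem_setOf_eq] at hxb
    linarith
  · intro a ha b hb
    exact refl_cap_convexHull v b Ω (ha b hb)

theorem stmt5 {n : ℕ} (hn : 2 ≤ n) (Ω : Set (EuclideanSpace ℝ (Fin n)))
    (hΩne : Ω.Nonempty) (hΩ : IsCompact Ω) :
    Uf (convexHull ℝ Ω) ⊆ Uf Ω := by
  intro x hx
  simp only [Uf, Set.mem_iInter, Set.mem_setOf_eq] at hx ⊢
  intro v hv
  exact le_trans (hx v hv) (level_convexHull_le Ω hΩne hΩ v hv)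
end

section
/- Let Ω be a nonempty compact subset of ℝ^n (n ≥ 2) and δ > 0. Then for every unit vector v, the level of the maximal cap of the δ-parallel body is at most that of Ω: l_{Ω_δ}(v) ≤ l_Ω(v). -/
open scoped RealInnerProductSpace

lemma refl_inner {n : ℕ} {v : EuclideanSpace ℝ (Fin n)} (hv : ‖v‖ = 1) (b : ℝ)
    (x : EuclideanSpace ℝ (Fin n)) : ⟪reflHyp v b x, v⟫ = 2*b - ⟪x, v⟫ := by
  rw [reflHyp, inner_sub_left, real_inner_smul_left, real_inner_self_eq_norm_sq, hv]
  ring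

lemma normsq_sub_smul {n : ℕ} {v : EuclideanSpace ℝ (Fin n)} (hv : ‖v‖ = 1) (c : ℝ)
    (u : EuclideanSpace ℝ (Fin n)) :
    ‖u - c • v‖^2 = ‖u‖^2 - 2*c*⟪u, v⟫ + c^2 := by
  rw [norm_sub_sq_real, real_inner_smul_right, norm_smul, hv]
  simp [mul_pow, sq_abs]
  ring

lemma refl_dist {n : ℕ} {v : EuclideanSpace ℝ (Fin n)} (hv : ‖v‖ = 1) (b : ℝ)
    (x z : EuclideanSpace ℝ (Fin n)) :
    dist (reflHyp v b z) (reflHyp v b x) = dist z x := by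
  rw [dist_eq_norm, dist_eq_norm]
  have h : reflHyp v b z - reflHyp v b x = (z - x) - (2*⟪z - x, v⟫) • v := by
    simp [reflHyp, inner_sub_left]
    module
  rw [h]
  have := normsq_sub_smul hv (2*⟪z - x, v⟫) (z - x)
  nlinarith [norm_nonneg ((z - x) - (2*⟪z - x, v⟫) • v), norm_nonneg (z - x)]

lemma refl_dist_le {n : ℕ} {v : EuclideanSpace ℝ (Fin n)} (hv : ‖v‖ = 1) {b : ℝ}
    {x z : EuclideanSpace ℝ (Fin n)} (hx : ⟪x, v⟫ ≤ b) (hz : b ≤ ⟪z, v⟫) :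
    dist (reflHyp v b z) x ≤ dist z x := by
  rw [dist_eq_norm, dist_eq_norm]
  have h : reflHyp v b z - x = (z - x) - (2*(⟪z,v⟫ - b)) • v := by
    simp [reflHyp]; module
  rw [h]
  have key := normsq_sub_smul hv (2*(⟪z,v⟫ - b)) (z - x)
  have hin : ⟪z - x, v⟫ = ⟪z,v⟫ - ⟪x,v⟫ := inner_sub_left z x v
  nlinarith [norm_nonneg ((z - x) - (2*(⟪z,v⟫ - b)) • v), norm_nonneg (z - x)]

theorem stmt16 {n : ℕ} (hn : 2 ≤ n) (Ω : Set (EuclideanSpace ℝ (Fin n)))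
    (hΩne : Ω.Nonempty) (hΩ : IsCompact Ω) (δ : ℝ) (hδ : 0 < δ)
    (v : EuclideanSpace ℝ (Fin n)) (hv : ‖v‖ = 1) :
    level (parallelBody Ω δ) v ≤ level Ω v := by
  obtain ⟨C0, hC0⟩ := hΩ.isBounded.subset_closedBall 0
  set C := max C0 0 with hCdef
  have hC : ∀ x ∈ Ω, ‖x‖ ≤ C := by
    intro x hx
    have := hC0 hx
    rw [Metric.mem_closedBall, dist_zero_right] at this
    exact this.trans (le_max_left _ _)
  -- bound for the parallel body
  have hPB : ∀ y ∈ parallelBody Ω δ, ‖y‖ ≤ C + δ := by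
    intro y hy
    obtain ⟨x, hx, hyx⟩ := Set.mem_iUnion₂.mp hy
    rw [Metric.mem_closedBall] at hyx
    calc ‖y‖ = dist y 0 := (dist_zero_right y).symm
    _ ≤ dist y x + dist x 0 := dist_triangle _ _ _
    _ ≤ δ + C := by
        rw [dist_zero_right]
        exact add_le_add hyx (hC x hx)
    _ = C + δ := add_comm _ _
  have hPBin : ∀ y ∈ parallelBody Ω δ, -(C + δ) ≤ ⟪y, v⟫ := by
    intro y hy
    have h1 := abs_real_inner_le_norm y v
    rw [hv, mul_one] at h1
    have := hPB y hy
    have h2 := neg_abs_le (⟪y, v⟫ : ℝ)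
    linarith [abs_le.mp (h1.trans this) |>.1]
  apply csInf_le_csInf
  · -- BddBelow for parallel body set
    refine ⟨-(C + δ), ?_⟩
    intro a ha
    by_contra hcon
    push_neg at hcon
    obtain ⟨x0, hx0⟩ := hΩne
    have hx0' : x0 ∈ parallelBody Ω δ := by
      refine Set.mem_iUnion₂.mpr ⟨x0, hx0, ?_⟩
      simp [le_of_lt hδ]
    have hx0in : a < ⟪x0, v⟫ := lt_of_lt_of_le hcon (hPBin x0 hx0')
    have hcap : x0 ∈ cap (parallelBody Ω δ) v a := ⟨hx0', hx0in⟩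
    have hr : reflHyp v a x0 ∈ parallelBody Ω δ :=
      ha a le_rfl (Set.mem_image_of_mem _ hcap)
    have h1 := hPBin _ hr
    rw [refl_inner hv] at h1
    have h2 := hPBin x0 hx0'
    linarith
  · -- Nonempty for Ω set
    refine ⟨C, ?_⟩
    intro b hb y hy
    obtain ⟨z, hz, rfl⟩ := hy
    exfalso
    have h1 := abs_real_inner_le_norm z v
    rw [hv, mul_one] at h1
    have := hC z hz.1
    have hbz : b < ⟪z, v⟫ := hz.2
    have := le_abs_self (⟪z, v⟫ : ℝ)
    linarith
  · -- subset
    intro a ha b hb y hy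
    obtain ⟨z, ⟨hzPB, hzb⟩, rfl⟩ := hy
    obtain ⟨x, hx, hzx⟩ := Set.mem_iUnion₂.mp hzPB
    rw [Metric.mem_closedBall] at hzx
    by_cases hxb : b < ⟪x, v⟫
    · -- x is in the cap of Ω; reflect it
      have hrx : reflHyp v b x ∈ Ω :=
        ha b hb (Set.mem_image_of_mem _ ⟨hx, hxb⟩)
      refine Set.mem_iUnion₂.mpr ⟨reflHyp v b x, hrx, ?_⟩
      rw [Metric.mem_closedBall, refl_dist hv]
      exact hzx
    · -- x below the hyperplane: reflection moves z closer to x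
      push_neg at hxb
      refine Set.mem_iUnion₂.mpr ⟨x, hx, ?_⟩
      rw [Metric.mem_closedBall]
      exact (refl_dist_le hv hxb (le_of_lt hzb)).trans hzx
end

section
/- Let Ω be a nonempty compact convex subset of ℝ^n (n ≥ 2) and δ > 0. Then the minimal unfolded region of the δ-parallel body equals that of Ω: Uf(Ω_δ) = Uf(Ω). -/
open scoped RealInnerProductSpace

lemma mem_parallelBody {n : ℕ} {Ω : Set (EuclideanSpace ℝ (Fin n))} {δ : ℝ}
    {y : EuclideanSpace ℝ (Fin n)} :
    y ∈ parallelBody Ω δ ↔ ∃ x ∈ Ω, dist y x ≤ δ := by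
  simp [parallelBody]

lemma aux_norm {n : ℕ} {v w : EuclideanSpace ℝ (Fin n)} (hv : ‖v‖ = 1) {s : ℝ}
    (hs : 0 ≤ s * (⟪w, v⟫ - s)) : ‖w - (2 * s) • v‖ ≤ ‖w‖ := by
  have h1 : ‖w - (2*s) • v‖^2 = ‖w‖^2 - 2 * ⟪w, (2*s)•v⟫ + ‖(2*s)•v‖^2 :=
    norm_sub_sq_real w ((2*s)•v)
  rw [real_inner_smul_right, norm_smul, hv] at h1
  have h2 : ‖w - (2*s) • v‖^2 ≤ ‖w‖^2 := by
    rw [h1]; simp only [mul_one, Real.norm_eq_abs]; nlinarith [sq_abs (2*s)]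
  nlinarith [norm_nonneg (w - (2*s)•v), norm_nonneg w]

lemma reflHyp_add {n : ℕ} {v : EuclideanSpace ℝ (Fin n)} (b : ℝ)
    (x w : EuclideanSpace ℝ (Fin n)) :
    reflHyp v b (x + w) = reflHyp v b x + (w - (2 * ⟪w, v⟫) • v) := by
  unfold reflHyp
  rw [inner_add_left]
  module

lemma erosion {n : ℕ} {Ω : Set (EuclideanSpace ℝ (Fin n))} (hΩ : IsCompact Ω)
    (hconv : Convex ℝ Ω) (hne : Ω.Nonempty) {δ : ℝ} (hδ : 0 < δ)
    {y : EuclideanSpace ℝ (Fin n)} (h : Metric.closedBall y δ ⊆ parallelBody Ω δ) :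
    y ∈ Ω := by
  by_contra hy
  obtain ⟨p, hpΩ, hp⟩ := exists_norm_eq_iInf_of_complete_convex hne
    (hΩ.isClosed.isComplete) hconv y
  have hproj : ∀ w ∈ Ω, ⟪y - p, w - p⟫ ≤ 0 :=
    (norm_eq_iInf_iff_real_inner_le_zero hconv hpΩ).mp hp
  have hyp : y - p ≠ 0 := sub_ne_zero.mpr (fun e => hy (e ▸ hpΩ))
  set r : ℝ := ‖y - p‖ with hr
  have hrpos : 0 < r := norm_pos_iff.mpr hyp
  set u : EuclideanSpace ℝ (Fin n) := r⁻¹ • (y - p) with hu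
  have hunorm : ‖u‖ = 1 := by
    rw [hu, norm_smul, Real.norm_eq_abs, abs_inv, abs_of_pos hrpos, ← hr,
      inv_mul_cancel₀ hrpos.ne']
  have hz : y + δ • u ∈ Metric.closedBall y δ := by
    simp [dist_eq_norm, norm_smul, hunorm, abs_of_pos hδ]
  obtain ⟨q, hqΩ, hq⟩ := mem_parallelBody.mp (h hz)
  have key : ⟪y + δ • u - q, u⟫ ≥ r + δ := by
    have e1 : ⟪y - p, u⟫ = r := by
      rw [hu, real_inner_smul_right, real_inner_self_eq_norm_sq, ← hr]
      rw [sq]; field_simp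
    have e2 : ⟪p - q, u⟫ ≥ 0 := by
      rw [hu, real_inner_smul_right]
      have : ⟪y - p, p - q⟫ ≥ 0 := by
        have h2 : ⟪y - p, q - p⟫ ≤ 0 := hproj q hqΩ
        rw [show p - q = -(q - p) by abel, inner_neg_right]; linarith
      rw [real_inner_comm]
      positivity
    have e3 : ⟪δ • u, u⟫ = δ := by
      rw [real_inner_smul_left, real_inner_self_eq_norm_sq, hunorm]; ring
    have : y + δ • u - q = (y - p) + δ • u + (p - q) := by abel
    rw [this, inner_add_left, inner_add_left, e1, e3]
    linarith
  have hb : ⟪y + δ • u - q, u⟫ ≤ δ := by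
    calc ⟪y + δ • u - q, u⟫ ≤ ‖y + δ • u - q‖ * ‖u‖ := real_inner_le_norm _ _
    _ = ‖y + δ • u - q‖ := by rw [hunorm, mul_one]
    _ ≤ δ := by rw [← dist_eq_norm]; exact hq
  linarith

lemma levelSet_eq {n : ℕ} {Ω : Set (EuclideanSpace ℝ (Fin n))} (hΩ : IsCompact Ω)
    (hconv : Convex ℝ Ω) (hne : Ω.Nonempty) {δ : ℝ} (hδ : 0 < δ)
    {v : EuclideanSpace ℝ (Fin n)} (hv : ‖v‖ = 1) :
    {a : ℝ | ∀ b : ℝ, a ≤ b → reflHyp v b '' cap (parallelBody Ω δ) v b ⊆ parallelBody Ω δ}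
      = {a : ℝ | ∀ b : ℝ, a ≤ b → reflHyp v b '' cap Ω v b ⊆ Ω} := by
  ext a
  simp only [Set.mem_setOf_eq]
  constructor
  · intro ha b hab
    rintro _ ⟨x, ⟨hxΩ, hxb⟩, rfl⟩
    apply erosion hΩ hconv hne hδ
    intro z hz
    set w : EuclideanSpace ℝ (Fin n) := z - reflHyp v b x with hw
    have hwδ : ‖w‖ ≤ δ := by rw [hw, ← dist_eq_norm]; exact Metric.mem_closedBall.mp hz
    set w' : EuclideanSpace ℝ (Fin n) := w - (2 * ⟪w, v⟫) • v with hw'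
    have hw'n : ‖w'‖ ≤ δ :=
      le_trans (aux_norm hv (s := ⟪w, v⟫) (by rw [sub_self, mul_zero])) hwδ
    have hvv : ⟪v, v⟫ = (1 : ℝ) := by
      rw [real_inner_self_eq_norm_sq, hv]; norm_num
    have hw'v : ⟪w', v⟫ = -⟪w, v⟫ := by
      rw [hw', inner_sub_left, real_inner_smul_left, hvv]; ring
    set y : EuclideanSpace ℝ (Fin n) := x + w' with hy
    have hrefl : reflHyp v b y = z := by
      rw [hy, reflHyp_add, hw'v, hw', hw]
      module
    have hyv : ⟪y, v⟫ = ⟪x, v⟫ - ⟪w, v⟫ := by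
      rw [hy, inner_add_left, hw'v]; ring
    by_cases hcase : b < ⟪y, v⟫
    · have hymem : y ∈ parallelBody Ω δ := mem_parallelBody.mpr
        ⟨x, hxΩ, by rw [hy, dist_eq_norm]; simpa using hw'n⟩
      have := ha b hab (Set.mem_image_of_mem _ (⟨hymem, hcase⟩ :
        y ∈ cap (parallelBody Ω δ) v b))
      rwa [hrefl] at this
    · push_neg at hcase
      have heq : z - x = w' - (2 * (⟪y, v⟫ - b)) • v := by
        rw [← hrefl, hy]
        show x + w' - (2 * (⟪x + w', v⟫ - b)) • v - x = w' - (2 * (⟪x + w', v⟫ - b)) • v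
        abel
      refine mem_parallelBody.mpr ⟨x, hxΩ, ?_⟩
      rw [dist_eq_norm, heq]
      refine le_trans (aux_norm hv ?_) hw'n
      rw [hw'v]
      have hxb' : b < ⟪x, v⟫ := hxb
      nlinarith [mul_nonneg (by linarith : (0:ℝ) ≤ b - ⟪y, v⟫) (by linarith : (0:ℝ) ≤ ⟪x, v⟫ - b), hyv]
  · intro ha b hab
    rintro _ ⟨y, ⟨hyΩδ, hyb⟩, rfl⟩
    obtain ⟨x, hxΩ, hxd⟩ := mem_parallelBody.mp hyΩδ
    set w : EuclideanSpace ℝ (Fin n) := y - x with hw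
    have hyx : y = x + w := by rw [hw]; abel
    have hwn : ‖w‖ ≤ δ := by rw [hw, ← dist_eq_norm]; exact hxd
    by_cases hcase : b < ⟪x, v⟫
    · have hx' : reflHyp v b x ∈ Ω :=
        ha b hab (Set.mem_image_of_mem _ (⟨hxΩ, hcase⟩ : x ∈ cap Ω v b))
      refine mem_parallelBody.mpr ⟨reflHyp v b x, hx', ?_⟩
      rw [hyx, reflHyp_add, dist_eq_norm]
      simpa using le_trans (aux_norm hv (s := ⟪w, v⟫) (by rw [sub_self, mul_zero])) hwn
    · push_neg at hcase
      refine mem_parallelBody.mpr ⟨x, hxΩ, ?_⟩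
      have heq : reflHyp v b y - x = w - (2 * (⟪y, v⟫ - b)) • v := by
        show y - (2 * (⟪y, v⟫ - b)) • v - x = w - (2 * (⟪y, v⟫ - b)) • v
        rw [hw]; abel
      rw [dist_eq_norm, heq]
      refine le_trans (aux_norm hv ?_) hwn
      have hwv : ⟪w, v⟫ = ⟪y, v⟫ - ⟪x, v⟫ := by rw [hw, inner_sub_left]
      have hyb' : b < ⟪y, v⟫ := hyb
      nlinarith [mul_nonneg (by linarith : (0:ℝ) ≤ ⟪y, v⟫ - b) (by linarith : (0:ℝ) ≤ b - ⟪x, v⟫), hwv]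

theorem stmt19 {n : ℕ} (hn : 2 ≤ n) (Ω : Set (EuclideanSpace ℝ (Fin n)))
    (hΩne : Ω.Nonempty) (hΩ : IsCompact Ω) (hconv : Convex ℝ Ω) (δ : ℝ) (hδ : 0 < δ) :
    Uf (parallelBody Ω δ) = Uf Ω := by
  unfold Uf
  refine Set.iInter_congr fun v => Set.iInter_congr fun hv => ?_
  have : level (parallelBody Ω δ) v = level Ω v := by
    unfold level
    rw [levelSet_eq hΩ hconv hΩne hδ hv]
  rw [this]
end
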